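/- arXiv:2304.06622 — 3 statements merged into one kernel-verified Lean document; each statement's English description precedes it below -/
import Mathlib

section
/- Let G be a connected pro-algebraic group over an algebraic closure k of 𝔽_q, written as a cofiltered limit G = lim G/H_i of connected quasi-algebraic groups over a directed set, equipped with a Frobenius endomorphism Fr : G → G stabilizing each H_i. Then the Lang map L : G → G, g ↦ g·Fr(g)⁻¹, is surjective on k-points. -/
/-!
Fix a compatible family `x`. At each stage the Lang fibre over `x i` is nonempty by Lang's
theorem and finite, since `g ↦ g₀⁻¹ * g` maps it injectively into the Frobenius-fixed points
for any `g₀` in it. The transition maps carry fibres into fibres, so by König's lemma for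
cofiltered systems of nonempty finite sets there is a compatible choice of points in the fibres.
-/

open CategoryTheory Set

section LangMap

variable {G H : Type*} [Group G] [Group H]

theorem lang_eq_lang_iff (φ : G →* G) (g h : G) :
    g * (φ g)⁻¹ = h * (φ h)⁻¹ ↔ φ (h⁻¹ * g) = h⁻¹ * g := by
  rw [map_mul, map_inv, mul_inv_eq_iff_eq_mul, mul_assoc, ← inv_mul_eq_iff_eq_mul,
    eq_comm]

theorem finite_lang_fiber (φ : G →* G) (hfin : {g : G | φ g = g}.Finite) (y : G) :
    {g : G | g * (φ g)⁻¹ = y}.Finite := by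
  rcases eq_empty_or_nonempty {g : G | g * (φ g)⁻¹ = y} with hempty | ⟨g₀, hg₀⟩
  · exact hempty ▸ finite_empty
  refine (hfin.image (g₀ * ·)).subset fun g hg => ⟨g₀⁻¹ * g, ?_, mul_inv_cancel_left g₀ g⟩
  exact (lang_eq_lang_iff φ g g₀).1 (hg.trans hg₀.symm)

theorem MonoidHom.map_lang (f : G →* H) {φ : G →* G} {ψ : H →* H}
    (hf : ∀ g, f (φ g) = ψ (f g)) (g : G) :
    f (g * (φ g)⁻¹) = f g * (ψ (f g))⁻¹ := by
  rw [map_mul, map_inv, hf]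

end LangMap

/-- The maps `t (le_refl i)` need not be the identity, only idempotent. -/
theorem exists_compatible_family_mem_of_finite_nonempty {ι : Type*} [Preorder ι]
    [IsDirected ι (· ≤ ·)] {X : ι → Type*} (t : ∀ {i j : ι}, i ≤ j → X j → X i)
    (hcomp : ∀ {i j k : ι} (hij : i ≤ j) (hjk : j ≤ k) (x : X k),
      t hij (t hjk x) = t (hij.trans hjk) x)
    (S : ∀ i, Set (X i)) (hmaps : ∀ {i j : ι} (h : i ≤ j), MapsTo (t h) (S j) (S i))
    (hfin : ∀ i, (S i).Finite) (hne : ∀ i, (S i).Nonempty) :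
    ∃ s : ∀ i, X i, (∀ {i j : ι} (h : i ≤ j), t h (s j) = s i) ∧ ∀ i, s i ∈ S i := by
  -- On the image of `t (le_refl i)` the transition maps form a genuine functor.
  let T : ∀ i, Set (X i) := fun i => t (le_refl i) '' S i
  have hT_maps : ∀ {i j : ι} (h : i ≤ j) (x : X j), x ∈ S j → t h x ∈ T i :=
    fun h x hx => ⟨t h x, hmaps h hx, hcomp _ h x⟩
  have hTS : ∀ i, T i ⊆ S i := fun i => image_subset_iff.2 (hmaps _)
  let F : ιᵒᵖ ⥤ Type _ :=
    { obj := fun i => T i.unop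
      map := fun f => TypeCat.ofHom fun x => ⟨t f.unop.le x, hT_maps _ _ (hTS _ x.2)⟩
      map_id := fun i => by
        ext ⟨x, y, -, rfl⟩
        exact hcomp _ _ y
      map_comp := fun f g => by
        ext x
        exact (hcomp g.unop.le f.unop.le x).symm }
  have : ∀ i, Finite (F.obj i) := fun i => ((hfin i.unop).image _).to_subtype
  have : ∀ i, Nonempty (F.obj i) := fun i => ((hne i.unop).image _).to_subtype
  obtain ⟨u, hu⟩ := nonempty_sections_of_finite_inverse_system F
  exact ⟨fun i => u (Opposite.op i), fun h => congrArg Subtype.val (hu h.hom.op),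
    fun i => hTS i (u (Opposite.op i)).2⟩

theorem lang_surjective_proalgebraic_general
    {ι : Type*} [Preorder ι] [IsDirected ι (· ≤ ·)]
    (G : ι → Type*) [∀ i, Group (G i)]
    (t : ∀ {i j : ι}, i ≤ j → G j →* G i)
    (hcomp : ∀ {i j k : ι} (hij : i ≤ j) (hjk : j ≤ k) (x : G k),
      t hij (t hjk x) = t (hij.trans hjk) x)
    (Fr : ∀ i, G i →* G i)
    (hFr : ∀ {i j : ι} (h : i ≤ j) (x : G j), t h (Fr j x) = Fr i (t h x))
    (hLang : ∀ i, Function.Surjective (fun g : G i => g * (Fr i g)⁻¹))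
    (hfin : ∀ i, {g : G i | Fr i g = g}.Finite)
    (x : ∀ i, G i) (hx : ∀ {i j : ι} (h : i ≤ j), t h (x j) = x i) :
    ∃ g : ∀ i, G i, (∀ {i j : ι} (h : i ≤ j), t h (g j) = g i) ∧
      ∀ i, g i * (Fr i (g i))⁻¹ = x i := by
  have hmaps : ∀ {i j : ι} (h : i ≤ j),
      MapsTo (t h) {g | g * (Fr j g)⁻¹ = x j} {g | g * (Fr i g)⁻¹ = x i} := by
    intro i j h g hg
    rw [mem_ofPred_eq, ← (t h).map_lang (hFr h), hg, hx h]
  exact exists_compatible_family_mem_of_finite_nonempty (fun h => t h) hcomp _ hmaps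
    (fun i => finite_lang_fiber (Fr i) (hfin i) (x i)) (fun i => hLang i (x i))

theorem lang_surjective_proalgebraic
    {ι : Type*} [Preorder ι] [IsDirected ι (· ≤ ·)] [Nonempty ι]
    (G : ι → Type*) [∀ i, Group (G i)]
    (t : ∀ {i j : ι}, i ≤ j → G j →* G i)
    (hcomp : ∀ {i j k : ι} (hij : i ≤ j) (hjk : j ≤ k) (x : G k),
      t hij (t hjk x) = t (hij.trans hjk) x)
    (Fr : ∀ i, G i →* G i)
    (hFr : ∀ {i j : ι} (h : i ≤ j) (x : G j), t h (Fr j x) = Fr i (t h x))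
    (hLang : ∀ i, Function.Surjective (fun g : G i => g * (Fr i g)⁻¹))
    (hfin : ∀ i, {g : G i | Fr i g = g}.Finite)
    (x : ∀ i, G i) (hx : ∀ {i j : ι} (h : i ≤ j), t h (x j) = x i) :
    ∃ g : ∀ i, G i, (∀ {i j : ι} (h : i ≤ j), t h (g j) = g i) ∧
      ∀ i, g i * (Fr i (g i))⁻¹ = x i :=
  lang_surjective_proalgebraic_general G t hcomp Fr hFr hLang hfin x hx
end

section
/- Let Γ be a finite group acting on a commutative pro-algebraic group G over an algebraically closed field k (in Serre's category 𝒫 with Serre's fundamental group functor π₁). Then π₁(G^Γ) = π₁(G)^Γ, i.e. the fundamental group of the fixed-point subgroup equals the Γ-invariants of the fundamental group. -/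
/-!
A left exact functor preserves kernels and finite products, so it carries the kernel of
`d = (ρ γ - 1)_γ : G ⟶ ∏_γ G` to the kernel of the induced map `π₁ G ⟶ ∏_γ π₁ G`;
left exactness also makes `π₁` additive, so that induced map is `(π₁ (ρ γ) - 1)_γ`.
-/

open CategoryTheory CategoryTheory.Limits

namespace CategoryTheory.Limits

variable {C D : Type*} [Category C] [Category D] [HasZeroMorphisms C] [HasZeroMorphisms D]
  (F : C ⥤ D) [F.PreservesZeroMorphisms] {J : Type*} {X : C} {Y : J → C} (f : ∀ j, X ⟶ Y j)
  [HasProduct Y] [HasProduct fun j => F.obj (Y j)] [PreservesLimit (Discrete.functor Y) F]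
  [HasKernel (Pi.lift f)] [HasKernel (F.map (Pi.lift f))]
  [HasKernel (Pi.lift fun j => F.map (f j))] [PreservesLimit (parallelPair (Pi.lift f) 0) F]

noncomputable def mapKernelPiLiftIso :
    F.obj (kernel (Pi.lift f)) ≅ kernel (Pi.lift fun j => F.map (f j)) :=
  PreservesKernel.iso F (Pi.lift f) ≪≫ (kernelCompMono _ (piComparison F Y)).symm ≪≫
    kernelIsoOfEq (map_lift_piComparison F Y X f)

end CategoryTheory.Limits

theorem pi1_of_fixed_points_general
    {P : Type*} [Category P] [Abelian P]
    {A : Type*} [Category A] [Abelian A]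
    (π₁ : P ⥤ A) [PreservesFiniteLimits π₁]
    (Γ : Type) [Group Γ] [Fintype Γ]
    (G : P) (ρ : Γ →* Aut G) :
    Nonempty
      (π₁.obj (kernel (Pi.lift (fun γ : Γ => (ρ γ).hom - 𝟙 G))) ≅
        kernel (Pi.lift (fun γ : Γ => π₁.map (ρ γ).hom - 𝟙 (π₁.obj G)))) := by
  have : π₁.Additive := π₁.additive_of_preserves_binary_products
  exact ⟨mapKernelPiLiftIso π₁ _ ≪≫ kernelIsoOfEq (by simp)⟩

theorem pi1_of_fixed_points
    {P : Type*} [Category P] [Abelian P]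
    {A : Type*} [Category A] [Abelian A]
    (π₁ : P ⥤ A) [π₁.Additive] [PreservesFiniteLimits π₁]
    (Γ : Type) [Group Γ] [Fintype Γ]
    (G : P) (ρ : Γ →* Aut G) :
    Nonempty
      (π₁.obj (kernel (Pi.lift (fun γ : Γ => (ρ γ).hom - 𝟙 G))) ≅
        kernel (Pi.lift (fun γ : Γ => π₁.map (ρ γ).hom - 𝟙 (π₁.obj G)))) :=
  pi1_of_fixed_points_general π₁ Γ G ρ
end

section
/- Let G be a connected commutative pro-algebraic group over 𝔽̄_q admitting a filtration by connected pro-unipotent subgroups U^(0) ⊃ U^(1) ⊃ ... with G = lim G/U^(i) and each G/U^(i) quasi-algebraic, and suppose each U^(i) is stable under an 𝔽_q-Frobenius. Then every ℓ-adically continuous character ρ : G(𝔽_q) → ℚ̄_ℓ^× factors through the quotient G(𝔽_q)/U^(i)(𝔽_q) for some i; in particular the image of ρ is finite, and Hom_{sm}(G(𝔽_q), ℚ̄_ℓ^×) = Hom_{ℚ̄_ℓ}(G(𝔽_q), ℚ̄_ℓ^×). -/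
/-!
Since `p ≠ ℓ`, `‖p‖ = 1` in the ultrametric field `L`, so raising a unit `u` with `‖u - 1‖ < 1`
to a `p`-power does not move it closer to `1`: `‖u ^ p ^ k - 1‖ = ‖u - 1‖`. By continuity `ρ`
maps some `U i` into the ball `‖u - 1‖ < 1`; if `ρ x ≠ 1` for some `x ∈ U i`, continuity again
gives a deeper `U j` mapped within distance `‖ρ x - 1‖` of `1`, while some `x ^ p ^ k` lies in
`U j`, a contradiction. The `U i` form a basis at `1` by compactness, and an open kernel in a
compact group has finite index.
-/

open Filter Topology

section Ultrametric

variable {L : Type*} [NormedField L] [IsUltrametricDist L]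

lemma IsUltrametricDist.norm_pow_sub_one_le {u : L} (hu : ‖u - 1‖ ≤ 1) (m : ℕ) :
    ‖u ^ m - 1‖ ≤ ‖u - 1‖ := by
  have hu1 : ‖u‖ ≤ 1 := by
    simpa [hu] using IsUltrametricDist.norm_add_one_le_max_norm_one (u - 1)
  rw [← geom_sum_mul, norm_mul]
  refine mul_le_of_le_one_left (norm_nonneg _) ?_
  refine IsUltrametricDist.norm_sum_le_of_forall_le_of_nonneg zero_le_one fun i _ => ?_
  simpa using pow_le_one₀ (norm_nonneg u) hu1

/-- Writing `u ^ n - 1 = (u - 1) * ∑ i < n, u ^ i`, the sum is congruent to `n` modulo the open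
unit ball, so it is a unit when `n` is. -/
lemma IsUltrametricDist.norm_pow_sub_one_eq {n : ℕ} (hn : ‖(n : L)‖ = 1) {u : L}
    (hu : ‖u - 1‖ < 1) : ‖u ^ n - 1‖ = ‖u - 1‖ := by
  have hsum : ∑ i ∈ Finset.range n, u ^ i = (∑ i ∈ Finset.range n, (u ^ i - 1)) + n := by
    simp [Finset.sum_sub_distrib]
  have hsmall : ‖∑ i ∈ Finset.range n, (u ^ i - 1)‖ < 1 :=
    (IsUltrametricDist.norm_sum_le_of_forall_le_of_nonneg (norm_nonneg _)
      fun i _ => IsUltrametricDist.norm_pow_sub_one_le hu.le i).trans_lt hu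
  have hunit : ‖∑ i ∈ Finset.range n, u ^ i‖ = 1 := by
    rw [hsum, IsUltrametricDist.norm_add_eq_max_of_norm_ne_norm (by rw [hn]; exact hsmall.ne),
      hn, max_eq_right hsmall.le]
  rw [← geom_sum_mul, norm_mul, hunit, one_mul]

end Ultrametric

lemma IsUltrametricDist.of_norm_algebraMap {K L : Type*} [NormedField K] [IsUltrametricDist K]
    [NormedField L] [Algebra K L] (hnorm : ∀ x : K, ‖algebraMap K L x‖ = ‖x‖) :
    IsUltrametricDist L :=
  isUltrametricDist_of_forall_norm_natCast_le_one fun n => by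
    rw [← map_natCast (algebraMap K L), hnorm]
    exact IsUltrametricDist.norm_natCast_le_one K n

lemma Padic.norm_natCast_prime_eq_one {p ℓ : ℕ} [Fact p.Prime] [Fact ℓ.Prime] (hpl : p ≠ ℓ) :
    ‖(p : ℚ_[ℓ])‖ = 1 :=
  Padic.norm_natCast_eq_one_iff.2 <| (Nat.coprime_primes Fact.out Fact.out).2 hpl.symm

lemma Subgroup.hasBasis_nhds_one_of_iInf_eq_bot {G ι : Type*} [Group G] [TopologicalSpace G]
    [IsTopologicalGroup G] [CompactSpace G] [Nonempty ι] {U : ι → Subgroup G}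
    (hopen : ∀ i, IsOpen (U i : Set G)) (hdir : Directed (· ≥ ·) U) (hbot : ⨅ i, U i = ⊥) :
    (𝓝 (1 : G)).HasBasis (fun _ => True) fun i => (U i : Set G) := by
  refine ⟨fun W => ⟨fun hW => ?_, fun ⟨i, _, hi⟩ =>
    mem_of_superset ((hopen i).mem_nhds (U i).one_mem) hi⟩⟩
  have hclosed i : IsClosed (U i : Set G) := (U i).isClosed_of_isOpen (hopen i)
  obtain ⟨i, hi⟩ := exists_subset_nhds_of_isCompact' (V := fun i => (U i : Set G)) (U := W)
    (hdir.mono_comp _ fun _ _ => SetLike.coe_subset_coe.2) (fun i => (hclosed i).isCompact)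
    hclosed
    (by simpa [← Subgroup.coe_iInf, hbot] using hW)
  exact ⟨i, trivial, hi⟩

theorem MonoidHom.exists_le_ker_of_hasBasis {G L ι : Type*} [Group G] [TopologicalSpace G]
    [NormedField L] [IsUltrametricDist L] {n : ℕ} (hn : ‖(n : L)‖ = 1) {U : ι → Subgroup G}
    (hbasis : (𝓝 (1 : G)).HasBasis (fun _ => True) fun i => (U i : Set G))
    (hpow : ∀ i j, ∀ x ∈ U i, ∃ k : ℕ, x ^ n ^ k ∈ U j) (ρ : G →* Lˣ) (hρ : Continuous ρ) :
    ∃ i, U i ≤ ρ.ker := by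
  have hsmall : ∀ r > 0, ∃ i, ∀ x ∈ U i, ‖(ρ x : L) - 1‖ < r := by
    simpa [dist_eq_norm] using (hbasis.tendsto_iff Metric.nhds_basis_ball).1
      ((Units.continuous_val.comp hρ).tendsto 1)
  obtain ⟨i, hi⟩ := hsmall 1 one_pos
  refine ⟨i, fun x hx => ?_⟩
  by_contra hne
  have hpos : 0 < ‖(ρ x : L) - 1‖ := by
    rw [norm_pos_iff, sub_ne_zero, ← Units.val_one, Ne, Units.val_inj]
    exact hne
  obtain ⟨j, hj⟩ := hsmall _ hpos
  obtain ⟨k, hk⟩ := hpow i j x hx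
  have hnk : ‖((n ^ k : ℕ) : L)‖ = 1 := by rw [Nat.cast_pow, norm_pow, hn, one_pow]
  have hjk := hj _ hk
  rw [map_pow, Units.val_pow_eq_pow_val,
    IsUltrametricDist.norm_pow_sub_one_eq hnk (hi x hx)] at hjk
  exact hjk.false

lemma MonoidHom.finite_range_of_isOpen_ker {G M : Type*} [Group G] [TopologicalSpace G]
    [SeparatelyContinuousMul G] [CompactSpace G] [Group M] (ρ : G →* M)
    (hker : IsOpen (ρ.ker : Set G)) : (Set.range ρ).Finite := by
  have := ρ.ker.quotient_finite_of_isOpen hker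
  have := Finite.of_equiv _ (QuotientGroup.quotientKerEquivRange ρ).toEquiv
  rw [← MonoidHom.coe_range]
  exact Set.toFinite _

theorem character_of_points_factors_general
    (p ℓ : ℕ) [Fact p.Prime] [Fact ℓ.Prime] (hpl : p ≠ ℓ)
    (L : Type*) [NormedField L] [Algebra ℚ_[ℓ] L]
    (hnorm : ∀ x : ℚ_[ℓ], ‖algebraMap ℚ_[ℓ] L x‖ = ‖x‖)
    (Gq : Type*) [CommGroup Gq] [TopologicalSpace Gq] [IsTopologicalGroup Gq]
    [CompactSpace Gq]
    (U : ℕ → Subgroup Gq)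
    (hUopen : ∀ i, IsOpen (U i : Set Gq))
    (hUanti : ∀ i j, i ≤ j → U j ≤ U i)
    (hUint : ⨅ i, U i = ⊥)
    (hUprop : ∀ i j, ∀ x ∈ U i, ∃ k : ℕ, x ^ p ^ k ∈ U j)
    (ρ : Gq →* Lˣ) (hρ : Continuous ρ) :
    (∃ i, ∀ x ∈ U i, ρ x = 1) ∧ (Set.range ρ).Finite ∧ IsOpen (ρ.ker : Set Gq) := by
  have : IsUltrametricDist L := .of_norm_algebraMap hnorm
  have hp : ‖(p : L)‖ = 1 := by
    rw [← map_natCast (algebraMap ℚ_[ℓ] L), hnorm, Padic.norm_natCast_prime_eq_one hpl]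
  have hbasis := Subgroup.hasBasis_nhds_one_of_iInf_eq_bot hUopen
    (Antitone.directed_ge fun i j => hUanti i j) hUint
  obtain ⟨i, hi⟩ := ρ.exists_le_ker_of_hasBasis hp hbasis hUprop hρ
  have hker : IsOpen (ρ.ker : Set Gq) := Subgroup.isOpen_mono hi (hUopen i)
  exact ⟨⟨i, fun x hx => hi hx⟩, ρ.finite_range_of_isOpen_ker hker, hker⟩

theorem character_of_points_factors
    (p ℓ : ℕ) [Fact p.Prime] [Fact ℓ.Prime] (hpl : p ≠ ℓ)
    (L : Type*) [NormedField L] [Algebra ℚ_[ℓ] L] [IsAlgClosure ℚ_[ℓ] L]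
    (hnorm : ∀ x : ℚ_[ℓ], ‖algebraMap ℚ_[ℓ] L x‖ = ‖x‖)
    (Gq : Type*) [CommGroup Gq] [TopologicalSpace Gq] [IsTopologicalGroup Gq]
    [CompactSpace Gq] [T2Space Gq] [TotallyDisconnectedSpace Gq]
    (U : ℕ → Subgroup Gq)
    (hUopen : ∀ i, IsOpen (U i : Set Gq))
    (hUanti : ∀ i j, i ≤ j → U j ≤ U i)
    (hUint : ⨅ i, U i = ⊥)
    (hUprop : ∀ i j, ∀ x ∈ U i, ∃ k : ℕ, x ^ p ^ k ∈ U j)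
    (ρ : Gq →* Lˣ) (hρ : Continuous ρ) :
    (∃ i, ∀ x ∈ U i, ρ x = 1) ∧ (Set.range ρ).Finite ∧ IsOpen (ρ.ker : Set Gq) :=
  character_of_points_factors_general p ℓ hpl L hnorm Gq U hUopen hUanti hUint hUprop ρ hρ
end
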